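/- arXiv:1904.00257 — 6 statements merged into one kernel-verified Lean document; each statement's English description precedes it below -/
import Mathlib

section
/- Let γ ∈ [0,1], P ∈ [0,1], c > 0, and let D : [0,1] → [0,∞) satisfy c·D(v) ≤ min{v, 1−v} for all v ∈ [0,1]. Let η ∈ ℝ satisfy |η| ≤ c(1−γ). Then for every v, v* ∈ [0,1], the post-interaction speed v' := v + γ·[P(1−v) + (1−P)(P v* − v)] + D(v)·η satisfies 0 ≤ v' ≤ 1. -/
/-- Physical admissibility of the uncontrolled binary interaction: if `γ, P ∈ [0,1]`,
`c > 0`, `c·D(v) ≤ min{v, 1−v}` on `[0,1]`, `D ≥ 0`, and `|η| ≤ c(1−γ)`, then for all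
`v, v* ∈ [0,1]` the post-interaction speed
`v' = v + γ[P(1−v) + (1−P)(P v* − v)] + D(v)η` lies in `[0,1]`. -/
theorem binary_interaction_admissible
    (γ P c : ℝ) (hγ : γ ∈ Set.Icc (0:ℝ) 1) (hP : P ∈ Set.Icc (0:ℝ) 1) (hc : 0 < c)
    (D : ℝ → ℝ) (hDnn : ∀ v ∈ Set.Icc (0:ℝ) 1, 0 ≤ D v)
    (hD : ∀ v ∈ Set.Icc (0:ℝ) 1, c * D v ≤ min v (1 - v))
    (η : ℝ) (hη : |η| ≤ c * (1 - γ))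
    (v vs : ℝ) (hv : v ∈ Set.Icc (0:ℝ) 1) (hvs : vs ∈ Set.Icc (0:ℝ) 1) :
    v + γ * (P * (1 - v) + (1 - P) * (P * vs - v)) + D v * η ∈ Set.Icc (0:ℝ) 1 := by
  obtain ⟨hγ0, hγ1⟩ := hγ
  obtain ⟨hP0, hP1⟩ := hP
  obtain ⟨hv0, hv1⟩ := hv
  obtain ⟨hvs0, hvs1⟩ := hvs
  have hDv := hDnn v ⟨hv0, hv1⟩
  have hDb := hD v ⟨hv0, hv1⟩
  have h1 : c * D v ≤ v := le_trans hDb (min_le_left _ _)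
  have h2 : c * D v ≤ 1 - v := le_trans hDb (min_le_right _ _)
  obtain ⟨hη1, hη2⟩ := abs_le.mp hη
  -- bound on the noise term
  have hmul1 : D v * η ≥ -(D v * (c * (1 - γ))) := by nlinarith [mul_le_mul_of_nonneg_left hη2 hDv]
  have hmul2 : D v * η ≤ D v * (c * (1 - γ)) := mul_le_mul_of_nonneg_left hη2 hDv
  constructor
  · nlinarith [mul_le_mul_of_nonneg_right h1 (sub_nonneg.mpr hγ1),
      mul_nonneg hP0 (mul_nonneg (sub_nonneg.mpr hP1) hvs0),
      mul_nonneg hγ0 (mul_nonneg hP0 (mul_nonneg (sub_nonneg.mpr hP1) hvs0))]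
  · nlinarith [mul_le_mul_of_nonneg_right h2 (sub_nonneg.mpr hγ1),
      mul_nonneg hγ0 (mul_nonneg (sub_nonneg.mpr hP1) (sub_nonneg.mpr (mul_le_one₀ hP1 hvs0 hvs1)))]
end

section
/- Let γ ∈ [0,1], ν > 0, P ∈ [0,1], v_d ∈ [0,1], Θ ∈ {0,1}, c > 0, and let D : [0,1] → [0,∞) satisfy c·D(v) ≤ min{v, 1−v} for all v ∈ [0,1]. Let η ∈ ℝ satisfy |η| ≤ c·ν(1−γ)/(ν+γ²). Then for every v, v* ∈ [0,1], the controlled post-interaction speed v' := v + (νγ/(ν+γ²Θ²))·[P(1−v) + (1−P)(P v* − v)] + (γ²Θ²/(ν+γ²Θ²))·(v_d − v) + D(v)·η satisfies 0 ≤ v' ≤ 1. -/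
set_option maxHeartbeats 1000000 in
/-- Physical admissibility of the controlled binary interaction: if `γ ∈ [0,1]`, `ν > 0`,
`P, v_d ∈ [0,1]`, `Θ ∈ {0,1}`, `c > 0`, `c·D(v) ≤ min{v, 1−v}` on `[0,1]`, `D ≥ 0`, and
`|η| ≤ c·ν(1−γ)/(ν+γ²)`, then for all `v, v* ∈ [0,1]` the controlled post-interaction
speed lies in `[0,1]`. -/
theorem controlled_binary_interaction_admissible
    (γ ν P vd Θ c : ℝ) (hγ : γ ∈ Set.Icc (0:ℝ) 1) (hν : 0 < ν)
    (hP : P ∈ Set.Icc (0:ℝ) 1) (hvd : vd ∈ Set.Icc (0:ℝ) 1)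
    (hΘ : Θ = 0 ∨ Θ = 1) (hc : 0 < c)
    (D : ℝ → ℝ) (hDnn : ∀ v ∈ Set.Icc (0:ℝ) 1, 0 ≤ D v)
    (hD : ∀ v ∈ Set.Icc (0:ℝ) 1, c * D v ≤ min v (1 - v))
    (η : ℝ) (hη : |η| ≤ c * (ν * (1 - γ) / (ν + γ ^ 2)))
    (v vs : ℝ) (hv : v ∈ Set.Icc (0:ℝ) 1) (hvs : vs ∈ Set.Icc (0:ℝ) 1) :
    v + ν * γ / (ν + γ ^ 2 * Θ ^ 2) * (P * (1 - v) + (1 - P) * (P * vs - v))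
      + γ ^ 2 * Θ ^ 2 / (ν + γ ^ 2 * Θ ^ 2) * (vd - v) + D v * η ∈ Set.Icc (0:ℝ) 1 := by
  obtain ⟨hγ0, hγ1⟩ := hγ
  obtain ⟨hP0, hP1⟩ := hP
  obtain ⟨hvd0, hvd1⟩ := hvd
  obtain ⟨hv0, hv1⟩ := hv
  obtain ⟨hvs0, hvs1⟩ := hvs
  have hs : Θ ^ 2 = 0 ∨ Θ ^ 2 = 1 := by rcases hΘ with h | h <;> simp [h]
  have hs0 : (0:ℝ) ≤ Θ ^ 2 := sq_nonneg Θ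
  have hs1 : Θ ^ 2 ≤ 1 := by rcases hs with h | h <;> simp [h]
  have hγsq : (0:ℝ) ≤ γ ^ 2 := sq_nonneg γ
  have hden : 0 < ν + γ ^ 2 * Θ ^ 2 := by nlinarith
  have hden2 : 0 < ν + γ ^ 2 := by nlinarith
  have hM0 : 0 ≤ ν * (1 - γ) / (ν + γ ^ 2) := div_nonneg (by nlinarith) hden2.le
  have hMden : ν * (1 - γ) / (ν + γ ^ 2) * (ν + γ ^ 2 * Θ ^ 2) ≤ ν * (1 - γ) := by
    rw [div_mul_eq_mul_div, div_le_iff₀ hden2]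
    nlinarith [mul_nonneg (mul_nonneg hν.le (by linarith : (0:ℝ) ≤ 1 - γ)) hγsq]
  -- bounds on the noise term
  have hDv0 : 0 ≤ D v := hDnn v ⟨hv0, hv1⟩
  have hDv := hD v ⟨hv0, hv1⟩
  have hDv1 : c * D v ≤ v := hDv.trans (min_le_left _ _)
  have hDv2 : c * D v ≤ 1 - v := hDv.trans (min_le_right _ _)
  have hηb := abs_le.mp hη
  have hnoise1 : -(v * (ν * (1 - γ) / (ν + γ ^ 2))) ≤ D v * η := by
    have h1 : D v * (-(c * (ν * (1 - γ) / (ν + γ ^ 2)))) ≤ D v * η :=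
      mul_le_mul_of_nonneg_left hηb.1 hDv0
    have h2 : (c * D v) * (ν * (1 - γ) / (ν + γ ^ 2))
        ≤ v * (ν * (1 - γ) / (ν + γ ^ 2)) := mul_le_mul_of_nonneg_right hDv1 hM0
    have h3 : D v * (-(c * (ν * (1 - γ) / (ν + γ ^ 2))))
        = -((c * D v) * (ν * (1 - γ) / (ν + γ ^ 2))) := by ring
    linarith
  have hnoise2 : D v * η ≤ (1 - v) * (ν * (1 - γ) / (ν + γ ^ 2)) := by
    have h1 : D v * η ≤ D v * (c * (ν * (1 - γ) / (ν + γ ^ 2))) :=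
      mul_le_mul_of_nonneg_left hηb.2 hDv0
    have h2 : (c * D v) * (ν * (1 - γ) / (ν + γ ^ 2))
        ≤ (1 - v) * (ν * (1 - γ) / (ν + γ ^ 2)) := mul_le_mul_of_nonneg_right hDv2 hM0
    have h3 : D v * (c * (ν * (1 - γ) / (ν + γ ^ 2)))
        = (c * D v) * (ν * (1 - γ) / (ν + γ ^ 2)) := by ring
    linarith
  have hw0 : 0 ≤ P + (1 - P) * P * vs := by
    nlinarith [mul_nonneg (mul_nonneg (by linarith : (0:ℝ) ≤ 1 - P) hP0) hvs0]
  have hw1 : P + (1 - P) * P * vs ≤ 1 := by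
    nlinarith [sq_nonneg (1 - P),
      mul_nonneg (mul_nonneg (by linarith : (0:ℝ) ≤ 1 - P) hP0)
        (by linarith : (0:ℝ) ≤ 1 - vs)]
  have hXeq : v + ν * γ / (ν + γ ^ 2 * Θ ^ 2) * (P * (1 - v) + (1 - P) * (P * vs - v))
      + γ ^ 2 * Θ ^ 2 / (ν + γ ^ 2 * Θ ^ 2) * (vd - v) + D v * η
      = (ν * (1 - γ) * v + ν * γ * (P + (1 - P) * P * vs) + γ ^ 2 * Θ ^ 2 * vd)
          / (ν + γ ^ 2 * Θ ^ 2) + D v * η := by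
    field_simp
    ring
  have hXlb : v * (ν * (1 - γ) / (ν + γ ^ 2))
      ≤ (ν * (1 - γ) * v + ν * γ * (P + (1 - P) * P * vs) + γ ^ 2 * Θ ^ 2 * vd)
          / (ν + γ ^ 2 * Θ ^ 2) := by
    rw [le_div_iff₀ hden]
    have h1 : ν * (1 - γ) / (ν + γ ^ 2) * (ν + γ ^ 2 * Θ ^ 2) * v
        ≤ ν * (1 - γ) * v := mul_le_mul_of_nonneg_right hMden hv0
    have h2 : 0 ≤ ν * γ * (P + (1 - P) * P * vs) :=
      mul_nonneg (mul_nonneg hν.le hγ0) hw0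
    have h3 : 0 ≤ γ ^ 2 * Θ ^ 2 * vd := mul_nonneg (mul_nonneg hγsq hs0) hvd0
    have h4 : v * (ν * (1 - γ) / (ν + γ ^ 2)) * (ν + γ ^ 2 * Θ ^ 2)
        = ν * (1 - γ) / (ν + γ ^ 2) * (ν + γ ^ 2 * Θ ^ 2) * v := by ring
    linarith
  have hXub : (ν * (1 - γ) * v + ν * γ * (P + (1 - P) * P * vs) + γ ^ 2 * Θ ^ 2 * vd)
          / (ν + γ ^ 2 * Θ ^ 2)
      ≤ 1 - (1 - v) * (ν * (1 - γ) / (ν + γ ^ 2)) := by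
    rw [div_le_iff₀ hden]
    have h1 : ν * (1 - γ) / (ν + γ ^ 2) * (ν + γ ^ 2 * Θ ^ 2) * (1 - v)
        ≤ ν * (1 - γ) * (1 - v) := mul_le_mul_of_nonneg_right hMden (by linarith)
    have h2 : 0 ≤ ν * γ * (1 - (P + (1 - P) * P * vs)) :=
      mul_nonneg (mul_nonneg hν.le hγ0) (by linarith)
    have h3 : 0 ≤ γ ^ 2 * Θ ^ 2 * (1 - vd) :=
      mul_nonneg (mul_nonneg hγsq hs0) (by linarith)
    have h4 : (1 - (1 - v) * (ν * (1 - γ) / (ν + γ ^ 2))) * (ν + γ ^ 2 * Θ ^ 2)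
        = (ν + γ ^ 2 * Θ ^ 2)
          - ν * (1 - γ) / (ν + γ ^ 2) * (ν + γ ^ 2 * Θ ^ 2) * (1 - v) := by ring
    have h5 : ν * γ * (P + (1 - P) * P * vs)
        = ν * γ - ν * γ * (1 - (P + (1 - P) * P * vs)) := by ring
    have h6 : γ ^ 2 * Θ ^ 2 * vd = γ ^ 2 * Θ ^ 2 - γ ^ 2 * Θ ^ 2 * (1 - vd) := by ring
    have h7 : ν * (1 - γ) * v = ν * (1 - γ) - ν * (1 - γ) * (1 - v) := by ring
    linarith
  rw [hXeq, Set.mem_Icc]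
  exact ⟨by linarith, by linarith⟩
end

section
/- Let P ∈ [0,1], v_d ∈ [0,1], p* > 0, and set V_∞ := (P + p*·v_d)/(P + (1−P)² + p*). Then |V_∞ − v_d| ≤ 2/p*. Consequently, if z is a random variable on a probability space and P = P(z) is measurable with values in [0,1], so that V_∞(z) = (P(z) + p* v_d)/(P(z) + (1−P(z))² + p*), then Var(V_∞(z)) ≤ E[(V_∞(z) − v_d)²] ≤ 4/(p*)². -/
/-!
Writing `D = P + (1 - P)²`, one has `V_∞ - v_d = (P - v_d D) / (D + p*)`. Both `P` and `v_d D` lie in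
`[0, 1]`, so the numerator is at most `1` in absolute value while the denominator is at least `p*`;
hence `|V_∞ - v_d| ≤ 1/p*`. The variance is the least mean square deviation from a constant, so
`Var V_∞ ≤ E[(V_∞ - v_d)²] ≤ 1/(p*)²`.
-/

open MeasureTheory ProbabilityTheory

noncomputable section

def equilibriumSpeed (P vd pstar : ℝ) : ℝ :=
  (P + pstar * vd) / (P + (1 - P) ^ 2 + pstar)

theorem abs_div_add_sub_le {x D v c p : ℝ} (hD : 0 ≤ D) (hp : 0 < p) (hx : |x - v * D| ≤ c) :
    |(x + p * v) / (D + p) - v| ≤ c / p := by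
  have hDp : 0 < D + p := by positivity
  have hdiff : (x + p * v) / (D + p) - v = (x - v * D) / (D + p) := by
    field_simp
    ring
  rw [hdiff, abs_div, abs_of_pos hDp]
  exact div_le_div₀ ((abs_nonneg _).trans hx) hx hp (le_add_of_nonneg_left hD)

theorem abs_equilibriumSpeed_sub_le {P vd pstar : ℝ} (hP : P ∈ Set.Icc (0 : ℝ) 1)
    (hvd : vd ∈ Set.Icc (0 : ℝ) 1) (hp : 0 < pstar) :
    |equilibriumSpeed P vd pstar - vd| ≤ 1 / pstar := by
  obtain ⟨hP0, hP1⟩ := hP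
  obtain ⟨hvd0, hvd1⟩ := hvd
  have hD0 : 0 ≤ P + (1 - P) ^ 2 := by positivity
  have hD1 : P + (1 - P) ^ 2 ≤ 1 := by nlinarith
  refine abs_div_add_sub_le hD0 hp (abs_sub_le_of_nonneg_of_le hP0 hP1 (by positivity) ?_)
  exact mul_le_one₀ hvd1 hD0 hD1

theorem variance_le_integral_sub_sq {Ω : Type*} [MeasurableSpace Ω] {μ : Measure Ω}
    [IsProbabilityMeasure μ] {X : Ω → ℝ} (hX : AEStronglyMeasurable X μ) (c : ℝ) :
    variance X μ ≤ ∫ ω, (X ω - c) ^ 2 ∂μ := by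
  rw [← variance_sub_const hX c]
  exact variance_le_expectation_sq (hX.sub aestronglyMeasurable_const)

theorem integral_sub_sq_le_of_abs_sub_le {Ω : Type*} [MeasurableSpace Ω] {μ : Measure Ω}
    [IsProbabilityMeasure μ] {X : Ω → ℝ} {c C : ℝ} (hXC : ∀ ω, |X ω - c| ≤ C) :
    ∫ ω, (X ω - c) ^ 2 ∂μ ≤ C ^ 2 := by
  calc ∫ ω, (X ω - c) ^ 2 ∂μ ≤ ∫ _, C ^ 2 ∂μ :=
        integral_mono_of_nonneg (.of_forall fun _ => sq_nonneg _) (integrable_const _)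
          (.of_forall fun ω => sq_le_sq' (abs_le.1 (hXC ω)).1 (abs_le.1 (hXC ω)).2)
    _ = C ^ 2 := by simp

end

/-- For `P ∈ [0,1]`, `v_d ∈ [0,1]`, `p* > 0` and
`V_∞ = (P + p* v_d)/(P + (1−P)² + p*)` one has `|V_∞ − v_d| ≤ 2/p*`; consequently, for
a `[0,1]`-valued random parameter `P(z)`, the variance of
`V_∞(z) = (P(z) + p* v_d)/(P(z) + (1−P(z))² + p*)` satisfies
`Var(V_∞(z)) ≤ E[(V_∞(z) − v_d)²] ≤ 4/(p*)²`. -/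
theorem controlled_equilibrium_speed_variance_bound
    {Ω : Type*} [MeasurableSpace Ω] (μ : Measure Ω) [IsProbabilityMeasure μ]
    (P vd pstar : ℝ) (hP : P ∈ Set.Icc (0:ℝ) 1) (hvd : vd ∈ Set.Icc (0:ℝ) 1)
    (hp : 0 < pstar)
    (Pz : Ω → ℝ) (hPz : Measurable Pz) (hPz01 : ∀ ω, Pz ω ∈ Set.Icc (0:ℝ) 1) :
    |(P + pstar * vd) / (P + (1 - P) ^ 2 + pstar) - vd| ≤ 2 / pstar ∧
    variance (fun ω => (Pz ω + pstar * vd) / (Pz ω + (1 - Pz ω) ^ 2 + pstar)) μ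
      ≤ ∫ ω, ((Pz ω + pstar * vd) / (Pz ω + (1 - Pz ω) ^ 2 + pstar) - vd) ^ 2 ∂μ ∧
    ∫ ω, ((Pz ω + pstar * vd) / (Pz ω + (1 - Pz ω) ^ 2 + pstar) - vd) ^ 2 ∂μ
      ≤ 4 / pstar ^ 2 := by
  have hdev : ∀ Q ∈ Set.Icc (0 : ℝ) 1, |equilibriumSpeed Q vd pstar - vd| ≤ 2 / pstar :=
    fun Q hQ => (abs_equilibriumSpeed_sub_le hQ hvd hp).trans (by gcongr; norm_num)
  have hV : Measurable fun ω => equilibriumSpeed (Pz ω) vd pstar := by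
    unfold equilibriumSpeed
    fun_prop
  refine ⟨hdev P hP, variance_le_integral_sub_sq hV.aestronglyMeasurable vd, ?_⟩
  calc _ ≤ (2 / pstar) ^ 2 := integral_sub_sq_le_of_abs_sub_le fun ω => hdev (Pz ω) (hPz01 ω)
    _ = 4 / pstar ^ 2 := by ring
end

section
/- Let r ∈ (0,1) and 0 ≤ a < b. Then ∫_a^b r^z/(r^z + (1−r^z)²) dz = (2/(√3·log r))·[arctan((2r^b − 1)/√3) − arctan((2r^a − 1)/√3)]. -/
open Real MeasureTheory intervalIntegral

lemma add_one_sub_sq_pos (x : ℝ) : 0 < x + (1 - x) ^ 2 := by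
  nlinarith [sq_nonneg (x - 1 / 2)]

lemma one_add_sq_two_mul_sub_one_div_sqrt_three (x : ℝ) :
    1 + ((2 * x - 1) / √3) ^ 2 = 4 / 3 * (x + (1 - x) ^ 2) := by
  rw [div_pow, sq_sqrt (by norm_num : (0 : ℝ) ≤ 3)]
  ring

lemma hasDerivAt_arctan_two_mul_sub_one_div_sqrt_three (x : ℝ) :
    HasDerivAt (fun x => arctan ((2 * x - 1) / √3)) (√3 / 2 / (x + (1 - x) ^ 2)) x := by
  have hlin : HasDerivAt (fun x : ℝ => (2 * x - 1) / √3) (2 / √3) x := by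
    simpa using (((hasDerivAt_id x).const_mul 2).sub_const 1).div_const √3
  refine ((hasDerivAt_arctan _).comp x hlin).congr_deriv ?_
  have h3 : √3 ^ 2 = 3 := sq_sqrt (by norm_num)
  have hx := (add_one_sub_sq_pos x).ne'
  rw [one_add_sq_two_mul_sub_one_div_sqrt_three]
  field_simp
  linear_combination -4 * h3

lemma continuous_rpow_div_add_one_sub_rpow_sq {r : ℝ} (hr : 0 < r) :
    Continuous fun z : ℝ => r ^ z / (r ^ z + (1 - r ^ z) ^ 2) := by
  have hc : Continuous fun z : ℝ => r ^ z := continuous_const.rpow continuous_id fun _ => .inl hr.ne'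
  exact hc.div (hc.add ((continuous_const.sub hc).pow 2)) fun z => (add_one_sub_sq_pos _).ne'

/-- Substituting `x = r ^ z`: the integrand is `x / (x² - x + 1) · dz`, and `dx = x log r · dz`. -/
lemma hasDerivAt_arctan_rpow_antiderivative {r : ℝ} (hr : 0 < r) (hr1 : r ≠ 1) (z : ℝ) :
    HasDerivAt (fun z => 2 / (√3 * log r) * arctan ((2 * r ^ z - 1) / √3))
      (r ^ z / (r ^ z + (1 - r ^ z) ^ 2)) z := by
  have hpow : HasDerivAt (fun z : ℝ => r ^ z) (r ^ z * log r) z :=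
    (hasStrictDerivAt_const_rpow hr z).hasDerivAt
  refine (((hasDerivAt_arctan_two_mul_sub_one_div_sqrt_three (r ^ z)).comp z hpow).const_mul
    (2 / (√3 * log r))).congr_deriv ?_
  have hlog : log r ≠ 0 := log_ne_zero_of_pos_of_ne_one hr hr1
  have hs : √3 ≠ 0 := by positivity
  field_simp

theorem mean_speed_uniform_uncertainty_integral_general
    (r a b : ℝ) (hr : r ∈ Set.Ioo (0:ℝ) 1) :
    ∫ z in a..b, r ^ z / (r ^ z + (1 - r ^ z) ^ 2)
      = 2 / (Real.sqrt 3 * Real.log r) *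
        (Real.arctan ((2 * r ^ b - 1) / Real.sqrt 3)
          - Real.arctan ((2 * r ^ a - 1) / Real.sqrt 3)) := by
  rw [integral_eq_sub_of_hasDerivAt
    (fun z _ => hasDerivAt_arctan_rpow_antiderivative hr.1 hr.2.ne z)
    ((continuous_rpow_div_add_one_sub_rpow_sq hr.1).intervalIntegrable a b)]
  ring

/-- For `r ∈ (0,1)` and `0 ≤ a < b`,
`∫_a^b r^z/(r^z + (1−r^z)²) dz
  = (2/(√3 log r))[arctan((2r^b−1)/√3) − arctan((2r^a−1)/√3)]`. -/
theorem mean_speed_uniform_uncertainty_integral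
    (r a b : ℝ) (hr : r ∈ Set.Ioo (0:ℝ) 1) (ha : 0 ≤ a) (hab : a < b) :
    ∫ z in a..b, r ^ z / (r ^ z + (1 - r ^ z) ^ 2)
      = 2 / (Real.sqrt 3 * Real.log r) *
        (Real.arctan ((2 * r ^ b - 1) / Real.sqrt 3)
          - Real.arctan ((2 * r ^ a - 1) / Real.sqrt 3)) :=
  mean_speed_uniform_uncertainty_integral_general r a b hr
end

section
/- Let λ > 0, V_∞ ∈ (0,1), C > 0, and set α := 2V_∞/λ, β := 2(1−V_∞)/λ. Define f(v) := C·v^{α−1}(1−v)^{β−1} for v ∈ (0,1). Then f is differentiable on (0,1) and for every v ∈ (0,1): (λ/2)·d/dv[v(1−v)·f(v)] = (V_∞ − v)·f(v). In other words, the beta-type density f is a stationary solution of the Fokker–Planck equation ∂_t f = (λ/2)∂_v²(v(1−v)f) − ∂_v[(V_∞ − v)f]. -/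
open Real Set Filter Topology

/-! With `α = 2V_∞/λ` and `β = 2(1-V_∞)/λ`, the flux `v(1-v)f(v)` is `C v^α (1-v)^β`, whose
derivative is `(α - (α+β)v) f(v)`; since `α + β = 2/λ`, multiplying by `λ/2` gives `(V_∞ - v) f(v)`. -/

lemma rpow_mul_one_sub_rpow_eq {a b v : ℝ} (hv : v ∈ Ioo (0 : ℝ) 1) :
    v ^ a * (1 - v) ^ b = v * (1 - v) * (v ^ (a - 1) * (1 - v) ^ (b - 1)) := by
  have h0 : v ≠ 0 := hv.1.ne'
  have h1 : 1 - v ≠ 0 := (sub_pos.2 hv.2).ne'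
  rw [rpow_sub_one h0, rpow_sub_one h1]
  field_simp

lemma hasDerivAt_rpow_mul_one_sub_rpow {a b v : ℝ} (hv : v ∈ Ioo (0 : ℝ) 1) :
    HasDerivAt (fun w => w ^ a * (1 - w) ^ b)
      (a * v ^ (a - 1) * (1 - v) ^ b - b * v ^ a * (1 - v) ^ (b - 1)) v := by
  have hpow : HasDerivAt (fun w => w ^ a) (a * v ^ (a - 1)) v :=
    hasDerivAt_rpow_const (Or.inl hv.1.ne')
  have hpow_one_sub : HasDerivAt (fun w => (1 - w) ^ b) (-1 * b * (1 - v) ^ (b - 1)) v :=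
    ((hasDerivAt_id v).const_sub 1).rpow_const (Or.inl (sub_pos.2 hv.2).ne')
  exact (hpow.mul hpow_one_sub).congr_deriv (by ring)

lemma differentiableOn_rpow_mul_one_sub_rpow (a b : ℝ) :
    DifferentiableOn ℝ (fun w : ℝ => w ^ a * (1 - w) ^ b) (Ioo 0 1) := fun _ hv =>
  (hasDerivAt_rpow_mul_one_sub_rpow hv).differentiableAt.differentiableWithinAt

lemma hasDerivAt_mul_one_sub_mul_rpow_mul_one_sub_rpow {a b v : ℝ} (hv : v ∈ Ioo (0 : ℝ) 1) :
    HasDerivAt (fun w => w * (1 - w) * (w ^ (a - 1) * (1 - w) ^ (b - 1)))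
      ((a - (a + b) * v) * (v ^ (a - 1) * (1 - v) ^ (b - 1))) v := by
  have hflux : (fun w => w ^ a * (1 - w) ^ b) =ᶠ[𝓝 v]
      fun w => w * (1 - w) * (w ^ (a - 1) * (1 - w) ^ (b - 1)) :=
    eventually_of_mem (isOpen_Ioo.mem_nhds hv) fun _ hw => rpow_mul_one_sub_rpow_eq hw
  refine ((hasDerivAt_rpow_mul_one_sub_rpow hv).congr_of_eventuallyEq hflux.symm).congr_deriv ?_
  have h0 : v ≠ 0 := hv.1.ne'
  have h1 : 1 - v ≠ 0 := (sub_pos.2 hv.2).ne'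
  rw [rpow_sub_one h0, rpow_sub_one h1]
  field_simp
  ring

theorem beta_density_stationary_FokkerPlanck_general
    (lam Vinf C : ℝ) (hlam : 0 < lam)
    (f : ℝ → ℝ)
    (hf : ∀ v, f v =
      C * v ^ (2 * Vinf / lam - 1) * (1 - v) ^ (2 * (1 - Vinf) / lam - 1)) :
    DifferentiableOn ℝ f (Set.Ioo 0 1) ∧
    ∀ v ∈ Set.Ioo (0:ℝ) 1,
      lam / 2 * deriv (fun w => w * (1 - w) * f w) v = (Vinf - v) * f v := by
  set α := 2 * Vinf / lam
  set β := 2 * (1 - Vinf) / lam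
  have hf' : f = fun w => C * (w ^ (α - 1) * (1 - w) ^ (β - 1)) :=
    funext fun w => by rw [hf]; ring
  refine ⟨hf' ▸ (differentiableOn_rpow_mul_one_sub_rpow _ _).const_mul C, fun v hv => ?_⟩
  have hflux : (fun w => w * (1 - w) * f w) =
      fun w => C * (w * (1 - w) * (w ^ (α - 1) * (1 - w) ^ (β - 1))) :=
    funext fun w => by rw [hf']; ring
  have hcoeff : lam / 2 * (α - (α + β) * v) = Vinf - v := by
    simp only [α, β]
    field_simp
    ring
  rw [hflux, ((hasDerivAt_mul_one_sub_mul_rpow_mul_one_sub_rpow hv).const_mul C).deriv, hf']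
  linear_combination C * (v ^ (α - 1) * (1 - v) ^ (β - 1)) * hcoeff

/-- The beta-type density `f(v) = C v^{α−1}(1−v)^{β−1}` with `α = 2V_∞/λ`,
`β = 2(1−V_∞)/λ`, `λ > 0`, `V_∞ ∈ (0,1)`, `C > 0`, is differentiable on `(0,1)` and
satisfies the stationary Fokker–Planck equation
`(λ/2) d/dv[v(1−v)f(v)] = (V_∞ − v)f(v)` on `(0,1)`. -/
theorem beta_density_stationary_FokkerPlanck
    (lam Vinf C : ℝ) (hlam : 0 < lam) (hV : Vinf ∈ Set.Ioo (0:ℝ) 1) (hC : 0 < C)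
    (f : ℝ → ℝ)
    (hf : ∀ v, f v =
      C * v ^ (2 * Vinf / lam - 1) * (1 - v) ^ (2 * (1 - Vinf) / lam - 1)) :
    DifferentiableOn ℝ f (Set.Ioo 0 1) ∧
    ∀ v ∈ Set.Ioo (0:ℝ) 1,
      lam / 2 * deriv (fun w => w * (1 - w) * f w) v = (Vinf - v) * f v :=
  beta_density_stationary_FokkerPlanck_general lam Vinf C hlam f hf
end

section
/- For ε > 0 define D_ε : [0,1] → [0,∞) by D_ε(v) := √(max((1+ε)v(1−v) − ε/4, 0)). Then: (i) with c := √(ε/(1+ε)) one has c·D_ε(v) ≤ min{v, 1−v} for all v ∈ [0,1]; (ii) D_ε converges uniformly on [0,1] to D(v) := √(v(1−v)) as ε → 0⁺ (indeed sup_{v∈[0,1]} |D_ε(v) − D(v)| ≤ √(ε/2)). -/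
open Real Filter

lemma sqrt_sub_sqrt_le {x y : ℝ} (hy : 0 ≤ y) (hxy : y ≤ x) :
    Real.sqrt x - Real.sqrt y ≤ Real.sqrt (x - y) := by
  have h1 : Real.sqrt x ≤ Real.sqrt (x - y) + Real.sqrt y := by
    have hxy' : 0 ≤ x - y := by linarith
    have h2 : x ≤ (Real.sqrt (x - y) + Real.sqrt y) ^ 2 := by
      have := Real.sq_sqrt hxy'
      have := Real.sq_sqrt hy
      have := mul_nonneg (Real.sqrt_nonneg (x - y)) (Real.sqrt_nonneg y)
      nlinarith
    calc Real.sqrt x ≤ Real.sqrt ((Real.sqrt (x - y) + Real.sqrt y) ^ 2) :=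
          Real.sqrt_le_sqrt h2
      _ = Real.sqrt (x - y) + Real.sqrt y := by
          rw [Real.sqrt_sq (by positivity)]
  linarith

lemma abs_sqrt_sub_sqrt_le {x y : ℝ} (hx : 0 ≤ x) (hy : 0 ≤ y) :
    |Real.sqrt x - Real.sqrt y| ≤ Real.sqrt |x - y| := by
  rcases le_total y x with h | h
  · rw [abs_of_nonneg (by linarith : (0:ℝ) ≤ x - y),
      abs_of_nonneg (sub_nonneg.mpr (Real.sqrt_le_sqrt h))]
    exact sqrt_sub_sqrt_le hy h
  · rw [abs_of_nonpos (by linarith : x - y ≤ 0),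
      abs_of_nonpos (sub_nonpos.mpr (Real.sqrt_le_sqrt h))]
    have := sqrt_sub_sqrt_le hx h
    rw [neg_sub, neg_sub]
    exact this

lemma dist_bound (e : ℝ) (he : 0 < e) (v : ℝ) (hv : v ∈ Set.Icc (0:ℝ) 1) :
    |Real.sqrt (max ((1 + e) * v * (1 - v) - e / 4) 0) - Real.sqrt (v * (1 - v))| ≤
      Real.sqrt (e / 2) := by
  obtain ⟨hv0, hv1⟩ := hv
  have ha : 0 ≤ v * (1 - v) := mul_nonneg hv0 (by linarith)
  have ha4 : v * (1 - v) ≤ 1 / 4 := by nlinarith [sq_nonneg (1 - 2 * v)]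
  have hM : 0 ≤ max ((1 + e) * v * (1 - v) - e / 4) 0 := le_max_right _ _
  have key : |max ((1 + e) * v * (1 - v) - e / 4) 0 - v * (1 - v)| ≤ e / 2 := by
    rcases le_or_gt ((1 + e) * v * (1 - v) - e / 4) 0 with h | h
    · rw [max_eq_right h]
      have : v * (1 - v) ≤ e / 4 := by nlinarith
      rw [abs_of_nonpos (by linarith)]
      linarith
    · rw [max_eq_left h.le]
      have h1 : (1 + e) * v * (1 - v) - e / 4 - v * (1 - v) = e * (v * (1 - v)) - e / 4 := by
        ring
      rw [h1, abs_le]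
      constructor <;> nlinarith
  calc |Real.sqrt (max ((1 + e) * v * (1 - v) - e / 4) 0) - Real.sqrt (v * (1 - v))|
      ≤ Real.sqrt |max ((1 + e) * v * (1 - v) - e / 4) 0 - v * (1 - v)| :=
        abs_sqrt_sub_sqrt_le hM ha
    _ ≤ Real.sqrt (e / 2) := Real.sqrt_le_sqrt key

/-- For `ε > 0` let `D_ε(v) = √(max((1+ε)v(1−v) − ε/4, 0))`. Then (i) with
`c = √(ε/(1+ε))` one has `c·D_ε(v) ≤ min{v, 1−v}` on `[0,1]`; (ii) `D_ε → D`,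
`D(v) = √(v(1−v))`, uniformly on `[0,1]` as `ε → 0⁺`, with the explicit bound
`|D_ε(v) − D(v)| ≤ √(ε/2)` on `[0,1]`. -/
theorem admissible_diffusion_approximation
    (ε : ℝ) (hε : 0 < ε)
    (Dε : ℝ → ℝ → ℝ)
    (hDε : ∀ e v, Dε e v = Real.sqrt (max ((1 + e) * v * (1 - v) - e / 4) 0)) :
    (∀ v ∈ Set.Icc (0:ℝ) 1, Real.sqrt (ε / (1 + ε)) * Dε ε v ≤ min v (1 - v)) ∧
    (∀ v ∈ Set.Icc (0:ℝ) 1, |Dε ε v - Real.sqrt (v * (1 - v))| ≤ Real.sqrt (ε / 2)) ∧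
    TendstoUniformlyOn Dε (fun v => Real.sqrt (v * (1 - v)))
      (nhdsWithin 0 (Set.Ioi 0)) (Set.Icc 0 1) := by
  refine ⟨?_, ?_, ?_⟩
  · intro v ⟨hv0, hv1⟩
    rw [hDε]
    have hc : (0:ℝ) ≤ ε / (1 + ε) := by positivity
    have hM : 0 ≤ max ((1 + ε) * v * (1 - ε / (1 + ε)) - ε / 4) 0 := le_max_right _ _
    rw [← Real.sqrt_mul hc]
    have hmin : 0 ≤ min v (1 - v) := le_min hv0 (by linarith)
    have key : ε / (1 + ε) * max ((1 + ε) * v * (1 - v) - ε / 4) 0 ≤ (min v (1 - v)) ^ 2 := by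
      rcases le_or_gt ((1 + ε) * v * (1 - v) - ε / 4) 0 with h | h
      · rw [max_eq_right h, mul_zero]
        exact sq_nonneg _
      · rw [max_eq_left h.le]
        rw [div_mul_eq_mul_div, div_le_iff₀ (by linarith : (0:ℝ) < 1 + ε)]
        rcases min_cases v (1 - v) with ⟨hm, hle⟩ | ⟨hm, hle⟩ <;> rw [hm]
        · nlinarith [sq_nonneg (ε / 2 - (1 + ε) * v)]
        · nlinarith [sq_nonneg (ε / 2 - (1 + ε) * (1 - v))]
    calc Real.sqrt (ε / (1 + ε) * max ((1 + ε) * v * (1 - v) - ε / 4) 0)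
        ≤ Real.sqrt ((min v (1 - v)) ^ 2) := Real.sqrt_le_sqrt key
      _ = min v (1 - v) := Real.sqrt_sq hmin
  · intro v hv
    rw [hDε]
    exact dist_bound ε hε v hv
  · rw [Metric.tendstoUniformlyOn_iff]
    intro δ hδ
    have hmem : Set.Ioo (0:ℝ) (2 * δ ^ 2) ∈ nhdsWithin 0 (Set.Ioi 0) := by
      apply mem_nhdsWithin.mpr
      exact ⟨Set.Iio (2 * δ ^ 2), isOpen_Iio, Set.mem_Iio.mpr (by positivity), fun x ⟨hx1, hx2⟩ => ⟨hx2, hx1⟩⟩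
    filter_upwards [hmem] with e ⟨he0, he2⟩ v hv
    rw [Real.dist_eq, hDε]
    have h1 : |Real.sqrt (max ((1 + e) * v * (1 - v) - e / 4) 0) - Real.sqrt (v * (1 - v))| ≤
        Real.sqrt (e / 2) := dist_bound e he0 v hv
    have h2 : Real.sqrt (e / 2) < δ := by
      rw [show δ = Real.sqrt (δ ^ 2) from (Real.sqrt_sq hδ.le).symm]
      exact Real.sqrt_lt_sqrt (by positivity) (by linarith)
    rw [abs_sub_comm] at h1
    linarith
end
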